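/- arXiv:2405.20893 — 11 statements merged into one kernel-verified Lean document; each statement's English description precedes it below -/
import Mathlib

section
/- Let h, k be Lie subalgebras of a Lie algebra g over a field K such that h is perfect. If h is a subideal of g witnessed by a finite chain h = l₀ ⊴ l₁ ⊴ ⋯ ⊴ lₙ = g of Lie subalgebras of g (each li an ideal of l_{i+1}), then h is an ideal of g, i.e. ⁅g, h⁆ ⊆ h. -/
/-- `a` is an ideal of `b` (for Lie subalgebras `a ≤ b` of `g`). -/
def LieSubalgebra.IsIdealOf {K : Type*} [Field K] {g : Type*} [LieRing g] [LieAlgebra K g]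
    (a b : LieSubalgebra K g) : Prop :=
  a ≤ b ∧ ∀ x ∈ b, ∀ y ∈ a, ⁅x, y⁆ ∈ a

lemma key_step {K : Type*} [Field K] {g : Type*} [LieRing g] [LieAlgebra K g]
    (h m p : LieSubalgebra K g)
    (hperf : ⁅(⊤ : LieIdeal K h), (⊤ : LieIdeal K h)⁆ = ⊤)
    (hm : h ≤ m) (hid : ∀ x ∈ m, ∀ y ∈ h, ⁅x, y⁆ ∈ h)
    (hmid : ∀ x ∈ p, ∀ y ∈ m, ⁅x, y⁆ ∈ m) :
    ∀ x ∈ p, ∀ y ∈ h, ⁅x, y⁆ ∈ h := by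
  intro x hx y hy
  have hy' : (⟨y, hy⟩ : h) ∈ Submodule.span K
      { m : h | ∃ a ∈ (⊤ : LieIdeal K h), ∃ b ∈ (⊤ : LieIdeal K h), ⁅a, b⁆ = m } := by
    rw [← LieSubmodule.lieIdeal_oper_eq_linear_span']
    exact (LieSubmodule.mem_toSubmodule _).mpr (by rw [hperf]; trivial)
  have : ∀ z : h, z ∈ Submodule.span K
      { m : h | ∃ a ∈ (⊤ : LieIdeal K h), ∃ b ∈ (⊤ : LieIdeal K h), ⁅a, b⁆ = m } →
      ⁅x, (z : g)⁆ ∈ h := by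
    intro z hz
    refine Submodule.span_induction (M := h) (p := fun (z : h) _ => ⁅x, (z : g)⁆ ∈ h) ?_ ?_ ?_ ?_ hz
    · rintro w ⟨a, -, b, -, rfl⟩
      have hab : ((⁅a, b⁆ : h) : g) = ⁅(a : g), (b : g)⁆ := rfl
      rw [hab, leibniz_lie]
      have h1 : ⁅x, (a : g)⁆ ∈ m := hmid x hx a (hm a.2)
      have h2 : ⁅x, (b : g)⁆ ∈ m := hmid x hx b (hm b.2)
      exact h.add_mem (hid _ h1 b b.2) (by
        rw [show ⁅(a : g), ⁅x, (b : g)⁆⁆ = -⁅⁅x, (b : g)⁆, (a : g)⁆ by rw [lie_skew]]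
        exact h.neg_mem (hid _ h2 a a.2))
    · simp
    · intro a b _ _ ha hb; show ⁅x, (a : g) + (b : g)⁆ ∈ h; rw [lie_add]; exact h.add_mem ha hb
    · intro t a _ ha; show ⁅x, t • (a : g)⁆ ∈ h; rw [lie_smul]; exact h.smul_mem t ha
  exact this ⟨y, hy⟩ hy'

/-- If a perfect Lie subalgebra `h` of `g` is a subideal of `g`, witnessed by a finite chain
`h = l 0 ⊴ l 1 ⊴ ⋯ ⊴ l n = g`, then `h` is an ideal of `g`. -/
theorem perfect_subideal_is_ideal {K : Type*} [Field K] {g : Type*} [LieRing g] [LieAlgebra K g]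
    (h : LieSubalgebra K g)
    (hperf : ⁅(⊤ : LieIdeal K h), (⊤ : LieIdeal K h)⁆ = ⊤)
    (n : ℕ) (l : Fin (n + 1) → LieSubalgebra K g)
    (hl0 : l 0 = h) (hln : l (Fin.last n) = ⊤)
    (hchain : ∀ i : Fin n, (l i.castSucc).IsIdealOf (l i.succ)) :
    ∀ x : g, ∀ y ∈ h, ⁅x, y⁆ ∈ h := by
  have main : ∀ i : Fin (n + 1), h ≤ l i ∧ ∀ x ∈ l i, ∀ y ∈ h, ⁅x, y⁆ ∈ h := by
    intro i
    induction i using Fin.induction with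
    | zero => exact ⟨hl0.ge, fun x hx y hy => by rw [hl0] at hx; exact h.lie_mem hx hy⟩
    | succ i ih =>
      obtain ⟨hle, hid⟩ := ih
      obtain ⟨hle', hid'⟩ := hchain i
      exact ⟨hle.trans hle', key_step h (l i.castSucc) (l i.succ) hperf hle hid hid'⟩
  intro x y hy
  exact (main (Fin.last n)).2 x (by rw [hln]; trivial) y hy
end

section
/- Let k be a Lie algebra over a field K and let h be a Lie ideal of k. Suppose h satisfies the following transitivity property: for every Lie algebra g over K (in the same universe as k) and every injective Lie algebra homomorphism j : k → g whose range is an ideal of g, the image j(h) is an ideal of g. Then h is a characteristic ideal of k, i.e. f(X) ∈ h for every derivation f of k and every X ∈ h. -/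
section Aux

variable {K : Type*} [Field K] {k : Type u} [LieRing k] [LieAlgebra K k]
  (f : LieDerivation K k k)

/-- Semidirect product of `k` with the line spanned by a derivation `f`. -/
abbrev SemiDir (f : LieDerivation K k k) : Type u := k × ↥(K ∙ f)

lemma span_comm (a b : ↥(K ∙ f)) (x : k) :
    (a : LieDerivation K k k) ((b : LieDerivation K k k) x)
      = (b : LieDerivation K k k) ((a : LieDerivation K k k) x) := by
  obtain ⟨c, hc⟩ := Submodule.mem_span_singleton.mp a.2
  obtain ⟨d, hd⟩ := Submodule.mem_span_singleton.mp b.2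
  simp [← hc, ← hd, LieDerivation.coe_smul, smul_comm c d]

instance : Bracket (SemiDir f) (SemiDir f) :=
  ⟨fun X Y => (⁅X.1, Y.1⁆ + (X.2 : LieDerivation K k k) Y.1
      - (Y.2 : LieDerivation K k k) X.1, 0)⟩

lemma semidir_bracket_def (X Y : SemiDir f) :
    ⁅X, Y⁆ = (⁅X.1, Y.1⁆ + (X.2 : LieDerivation K k k) Y.1
      - (Y.2 : LieDerivation K k k) X.1, 0) := rfl

instance : LieRing (SemiDir f) where
  add_lie X Y Z := by
    simp only [semidir_bracket_def, Prod.fst_add, Prod.snd_add, add_lie, Submodule.coe_add,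
      LieDerivation.coe_add, Pi.add_apply, map_add, Prod.mk_add_mk, add_zero]
    congr 1
    abel
  lie_add X Y Z := by
    simp only [semidir_bracket_def, Prod.fst_add, Prod.snd_add, lie_add, Submodule.coe_add,
      LieDerivation.coe_add, Pi.add_apply, map_add, Prod.mk_add_mk, add_zero]
    congr 1
    abel
  lie_self X := by
    simp [semidir_bracket_def]
  leibniz_lie X Y Z := by
    obtain ⟨x, a⟩ := X; obtain ⟨y, b⟩ := Y; obtain ⟨z, c⟩ := Z
    simp only [semidir_bracket_def, map_zero, Prod.mk_add_mk, add_zero]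
    ext
    · show _ = _
      simp only [map_add, map_sub, lie_add, lie_sub, add_lie, sub_lie,
        LieDerivation.apply_lie_eq_add, map_zero,
        span_comm f a b, span_comm f a c, span_comm f b c, leibniz_lie x y z,
        ZeroMemClass.coe_zero, LieDerivation.coe_zero, Pi.zero_apply, smul_zero, neg_zero, add_zero, ← lie_skew ((c : LieDerivation K k k) x) y]
      abel
    · rfl

instance : LieAlgebra K (SemiDir f) where
  lie_smul t X Y := by
    simp only [semidir_bracket_def, Prod.smul_fst, Prod.smul_snd, lie_smul, map_smul,
      SetLike.val_smul, LieDerivation.coe_smul, Pi.smul_apply, Prod.smul_mk, smul_zero]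
    congr 1
    module

/-- Inclusion of `k` into the semidirect product. -/
def semidirIncl : k →ₗ⁅K⁆ SemiDir f where
  toFun x := (x, 0)
  map_add' x y := by simp
  map_smul' t x := by simp
  map_lie' {x y} := by simp [semidir_bracket_def]

end Aux

/-- If a Lie ideal `h` of `k` has the property that its image is an ideal whenever `k` embeds
as an ideal into some Lie algebra `g`, then `h` is a characteristic ideal of `k`, i.e. it is
invariant under every derivation of `k`. -/
theorem characteristic_of_transitive {K : Type*} [Field K]
    (k : Type u) [LieRing k] [LieAlgebra K k] (h : LieIdeal K k)
    (htrans : ∀ (g : Type u) (_ : LieRing g) (_ : LieAlgebra K g) (j : k →ₗ⁅K⁆ g),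
      Function.Injective j →
      (∀ x : g, ∀ y ∈ j.range, ⁅x, y⁆ ∈ j.range) →
      (∀ x : g, ∀ y ∈ j '' (h : Set k), ⁅x, y⁆ ∈ j '' (h : Set k))) :
    ∀ f : LieDerivation K k k, ∀ X ∈ h, f X ∈ h := by
  intro f X hX
  have hinj : Function.Injective (semidirIncl f) := by
    intro x y hxy
    exact congrArg Prod.fst hxy
  have hrange : ∀ x : SemiDir f, ∀ y ∈ (semidirIncl f).range,
      ⁅x, y⁆ ∈ (semidirIncl f).range := by
    rintro x y ⟨z, rfl⟩
    refine ⟨⁅x.1, z⁆ + (x.2 : LieDerivation K k k) z, ?_⟩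
    simp [semidirIncl, semidir_bracket_def]
  have key := htrans (SemiDir f) _ _ (semidirIncl f) hinj hrange
    (0, ⟨f, Submodule.mem_span_singleton_self f⟩) (semidirIncl f X) ⟨X, hX, rfl⟩
  obtain ⟨Y, hY, hYeq⟩ := key
  have : Y = f X := by
    have := congrArg Prod.fst hYeq
    simpa [semidirIncl, semidir_bracket_def] using this
  rwa [← this]
end

section
/- Let h be a Lie algebra over a field K. Then h is perfect if and only if for every Lie algebra g over K (in the same universe as h) and every injective Lie algebra homomorphism f : h → g whose range is an ideal of g, the range of f is a characteristic ideal of g, i.e. it is invariant under every derivation of g. -/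
section ProdLie

variable {L M : Type*} [LieRing L] [LieRing M]

instance prodLieRing : LieRing (L × M) where
  bracket x y := (⁅x.1, y.1⁆, ⁅x.2, y.2⁆)
  add_lie x y z := Prod.ext (add_lie x.1 y.1 z.1) (add_lie x.2 y.2 z.2)
  lie_add x y z := Prod.ext (lie_add x.1 y.1 z.1) (lie_add x.2 y.2 z.2)
  lie_self x := Prod.ext (lie_self x.1) (lie_self x.2)
  leibniz_lie x y z := Prod.ext (leibniz_lie x.1 y.1 z.1) (leibniz_lie x.2 y.2 z.2)

@[simp] lemma prod_bracket_fst (x y : L × M) : ⁅x, y⁆.1 = ⁅x.1, y.1⁆ := rfl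
@[simp] lemma prod_bracket_snd (x y : L × M) : ⁅x, y⁆.2 = ⁅x.2, y.2⁆ := rfl

instance prodLieAlgebra (K : Type*) [CommRing K] [LieAlgebra K L] [LieAlgebra K M] :
    LieAlgebra K (L × M) where
  lie_smul t x y := Prod.ext (lie_smul t x.1 y.1) (lie_smul t x.2 y.2)

end ProdLie

/-- A Lie algebra `h` is perfect iff whenever `h` embeds into a Lie algebra `g` with image an
ideal of `g`, the image of `h` is a characteristic ideal of `g` (invariant under every
derivation of `g`). -/
theorem perfect_iff_characteristic {K : Type*} [Field K]
    (h : Type u) [LieRing h] [LieAlgebra K h] :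
    ⁅(⊤ : LieIdeal K h), (⊤ : LieIdeal K h)⁆ = ⊤ ↔
    ∀ (g : Type u) (_ : LieRing g) (_ : LieAlgebra K g) (f : h →ₗ⁅K⁆ g),
      Function.Injective f →
      (∀ x : g, ∀ y ∈ f.range, ⁅x, y⁆ ∈ f.range) →
      (∀ D : LieDerivation K g g, ∀ y ∈ f.range, D y ∈ f.range) := by
  constructor
  · intro hperf g _ _ f hinj hideal D y hy
    obtain ⟨x, rfl⟩ := hy
    have hx : x ∈ (⊤ : LieIdeal K h) := trivial
    rw [← hperf, ← LieSubmodule.mem_toSubmodule,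
      LieSubmodule.lieIdeal_oper_eq_linear_span] at hx
    have key : ∀ a b : h, D (f ⁅a, b⁆) ∈ f.range := by
      intro a b
      have heq : D (f ⁅a, b⁆) = ⁅D (f a), f b⁆ - ⁅D (f b), f a⁆ := by
        rw [LieHom.map_lie, D.apply_lie_eq_add, ← lie_skew (f a) (D (f b))]
        abel
      rw [heq]
      obtain ⟨u, hu⟩ := hideal (D (f a)) _ (f.mem_range_self b)
      obtain ⟨v, hv⟩ := hideal (D (f b)) _ (f.mem_range_self a)
      exact ⟨u - v, by rw [map_sub, hu, hv]⟩
    induction hx using Submodule.span_induction with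
    | mem m hm =>
      obtain ⟨a, b, rfl⟩ := hm
      exact key a b
    | zero => simp
    | add a b _ _ ha hb =>
      obtain ⟨u, hu⟩ := ha; obtain ⟨v, hv⟩ := hb
      exact ⟨u + v, by simp [map_add, hu, hv]⟩
    | smul t a _ ha =>
      obtain ⟨u, hu⟩ := ha
      exact ⟨t • u, by simp [map_smul, hu]⟩
  · intro H
    by_contra hne
    set I : LieIdeal K h := ⁅(⊤ : LieIdeal K h), (⊤ : LieIdeal K h)⁆ with hI
    obtain ⟨x, hx⟩ : ∃ x : h, x ∉ I := by
      by_contra hc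
      push_neg at hc
      exact hne (le_antisymm le_top fun y _ => hc y)
    set g := h × (h ⧸ I) with hg
    have habelian : ∀ a b : h ⧸ I, ⁅a, b⁆ = 0 := by
      intro a b
      obtain ⟨a, rfl⟩ := LieSubmodule.Quotient.surjective_mk' I a
      obtain ⟨b, rfl⟩ := LieSubmodule.Quotient.surjective_mk' I b
      show ⁅(LieSubmodule.Quotient.mk (N := I) a), LieSubmodule.Quotient.mk (N := I) b⁆ = 0
      rw [← LieSubmodule.Quotient.mk_bracket]
      rw [LieSubmodule.Quotient.mk_eq_zero']
      exact LieSubmodule.lie_mem_lie trivial trivial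
    let f : h →ₗ⁅K⁆ g :=
      { toLinearMap := LinearMap.inl K h (h ⧸ I)
        map_lie' := by intro a b; exact Prod.ext rfl ((habelian 0 0).symm) }
    have hinj : Function.Injective f := fun a b hab => congrArg Prod.fst hab
    have hrange : ∀ y : g, y ∈ f.range ↔ y.2 = 0 := by
      intro y
      constructor
      · rintro ⟨z, rfl⟩; rfl
      · intro hy; exact ⟨y.1, Prod.ext rfl hy.symm⟩
    have hideal : ∀ x : g, ∀ y ∈ f.range, ⁅x, y⁆ ∈ f.range :=
      fun a y _ => (hrange _).2 (habelian a.2 y.2)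
    let D : LieDerivation K g g :=
      { toLinearMap :=
          (LinearMap.inr K h (h ⧸ I)) ∘ₗ
            ((LieSubmodule.Quotient.mk' I : h →ₗ⁅K,h⁆ h ⧸ I) : h →ₗ[K] h ⧸ I) ∘ₗ
              (LinearMap.fst K h (h ⧸ I))
        leibniz' := by
          intro a b
          refine Prod.ext ?_ ?_
          · show (0 : h) = ⁅a.1, (0 : h)⁆ - ⁅b.1, (0 : h)⁆
            simp
          · show LieSubmodule.Quotient.mk (N := I) ⁅a.1, b.1⁆ =
              ⁅a.2, LieSubmodule.Quotient.mk (N := I) b.1⁆ -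
                ⁅b.2, LieSubmodule.Quotient.mk (N := I) a.1⁆
            rw [habelian, habelian, sub_zero, LieSubmodule.Quotient.mk_eq_zero']
            exact LieSubmodule.lie_mem_lie trivial trivial }
    have hcontra := H g _ _ f hinj hideal D (f x) (f.mem_range_self x)
    rw [hrange] at hcontra
    apply hx
    rw [← LieSubmodule.Quotient.mk_eq_zero']
    exact hcontra
end

section
/- Let g be a perfect Lie algebra over a field K with trivial center. Then the Lie algebra D(g) of derivations of g is complete: D(g) has trivial center, and every derivation of D(g) is inner, i.e. for every derivation F of D(g) there exists f ∈ D(g) such that F = ad_f (meaning F(gʹ) = ⁅f, gʹ⁆ for all gʹ ∈ D(g)). -/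
/-- If `g` is a perfect Lie algebra with trivial center, then its derivation algebra `D(g)` is
complete: `D(g)` has trivial center and every derivation of `D(g)` is inner. -/
theorem derivation_algebra_complete_of_perfect {K : Type*} [Field K]
    (g : Type*) [LieRing g] [LieAlgebra K g]
    (hperf : ⁅(⊤ : LieIdeal K g), (⊤ : LieIdeal K g)⁆ = ⊤)
    (hcenter : LieAlgebra.center K g = ⊥) :
    LieAlgebra.center K (LieDerivation K g g) = ⊥ ∧
    ∀ F : LieDerivation K (LieDerivation K g g) (LieDerivation K g g),
      ∃ f : LieDerivation K g g, F = LieDerivation.ad K (LieDerivation K g g) f := by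
  have hinj : Function.Injective (LieDerivation.ad K g) :=
    LieDerivation.injective_ad_of_center_eq_bot hcenter
  have hzero : ∀ x : g, LieDerivation.ad K g x = 0 → x = 0 := by
    intro x hx
    apply hinj
    simpa using hx
  have hadsub : ∀ x y : g, LieDerivation.ad K g (x - y) =
      LieDerivation.ad K g x - LieDerivation.ad K g y := by
    intro x y
    exact (LieDerivation.ad K g).toLinearMap.map_sub x y
  constructor
  · rw [LieSubmodule.eq_bot_iff]
    intro F hF
    ext x
    have h1 : ⁅F, LieDerivation.ad K g x⁆ = 0 := by
      have := hF (LieDerivation.ad K g x)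
      rw [← neg_eq_zero, ← lie_skew] at this
      simpa using this
    rw [LieDerivation.lie_der_ad_eq_ad_der] at h1
    simpa using hzero _ h1
  · intro F
    set A : g →ₗ[K] LieDerivation K g g := (LieDerivation.ad K g).toLinearMap with hA
    have hAa : ∀ x : g, A x = LieDerivation.ad K g x := fun _ => rfl
    have hinjA : Function.Injective A := hinj
    -- Step 1: `F` maps the inner derivations into the inner derivations (uses perfectness).
    have key : ∀ z : g, (F.toLinearMap ∘ₗ A) z ∈ LinearMap.range A := by
      have hle : Submodule.span K {m : g | ∃ x ∈ (⊤ : LieIdeal K g), ∃ n ∈ (⊤ : LieIdeal K g),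
          ⁅x, n⁆ = m} ≤ Submodule.comap (F.toLinearMap ∘ₗ A) (LinearMap.range A) := by
        rw [Submodule.span_le]
        rintro m ⟨x, -, y, -, rfl⟩
        simp only [Submodule.mem_comap, LinearMap.coe_comp, Function.comp_apply, SetLike.mem_coe]
        show F (A ⁅x, y⁆) ∈ LinearMap.range A
        rw [hAa, LieHom.map_lie, F.apply_lie_eq_add,
          LieDerivation.lie_der_ad_eq_ad_der, ← lie_skew, LieDerivation.lie_der_ad_eq_ad_der]
        exact ⟨F (LieDerivation.ad K g x) y - F (LieDerivation.ad K g y) x, by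
          rw [hAa, hadsub]; abel⟩
      intro z
      apply hle
      rw [← LieSubmodule.lieIdeal_oper_eq_linear_span', hperf]
      trivial
    -- Step 2: pull back `F ∘ ad` along `ad` to get a linear map `d : g → g`.
    let e := LinearEquiv.ofInjective A hinjA
    let d : g →ₗ[K] g :=
      e.symm.toLinearMap ∘ₗ (F.toLinearMap ∘ₗ A).codRestrict (LinearMap.range A) key
    have hd : ∀ z : g, LieDerivation.ad K g (d z) =
        F (LieDerivation.ad K g z) := by
      intro z
      have h1 : e (d z) = ((F.toLinearMap ∘ₗ A).codRestrict (LinearMap.range A) key) z := by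
        simp [d, LinearEquiv.apply_symm_apply]
      have h2 := congrArg (Subtype.val) h1
      have h3 : A (d z) = F (A z) := by simpa [e, LinearEquiv.ofInjective_apply] using h2
      exact h3
    -- Step 3: `d` is a derivation of `g`.
    let f : LieDerivation K g g :=
      { toLinearMap := d
        leibniz' := by
          intro a b
          apply hinj
          show LieDerivation.ad K g (d ⁅a, b⁆) = LieDerivation.ad K g (⁅a, d b⁆ - ⁅b, d a⁆)
          rw [hd, LieHom.map_lie, F.apply_lie_eq_add, hadsub]
          rw [LieHom.map_lie, LieHom.map_lie, hd, hd,
            LieDerivation.lie_der_ad_eq_ad_der]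
          rw [← lie_skew (LieDerivation.ad K g b) (F (LieDerivation.ad K g a))]
          rw [← LieDerivation.lie_der_ad_eq_ad_der (F (LieDerivation.ad K g a)) b]
          abel }
    refine ⟨f, ?_⟩
    -- Step 4: `F = ad f`.
    ext E x
    have hadf : LieDerivation.ad K (LieDerivation K g g) f E = ⁅f, E⁆ := by simp
    rw [hadf]
    apply hinj
    have hfa : ∀ a : g, f a = d a := fun _ => rfl
    have hFE : LieDerivation.ad K g ((F E) x) =
        LieDerivation.ad K g (d (E x)) - LieDerivation.ad K g (E (d x)) := by
      rw [← LieDerivation.lie_der_ad_eq_ad_der (F E) x]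
      have hFe : F ⁅E, LieDerivation.ad K g x⁆ =
          ⁅E, F (LieDerivation.ad K g x)⁆ + ⁅F E, LieDerivation.ad K g x⁆ :=
        F.apply_lie_eq_add _ _
      have h3 : ⁅F E, LieDerivation.ad K g x⁆ =
          F (LieDerivation.ad K g (E x)) - ⁅E, F (LieDerivation.ad K g x)⁆ := by
        rw [← LieDerivation.lie_der_ad_eq_ad_der E x, hFe]; abel
      rw [h3, ← hd (E x), ← hd x, LieDerivation.lie_der_ad_eq_ad_der E (d x)]
    have hfE : LieDerivation.ad K g ((⁅f, E⁆ : LieDerivation K g g) x) =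
        LieDerivation.ad K g (d (E x)) - LieDerivation.ad K g (E (d x)) := by
      rw [LieDerivation.commutator_apply, hfa, hfa x, hadsub]
    rw [hFE, hfE]
end

section
/- Let g be a Lie algebra over a field K with trivial center, let D(g) be its Lie algebra of derivations, and let D²(g) denote the Lie algebra of derivations of D(g). Embed g into D²(g) by X ↦ ad_{D(g)}(ad_g(X)), where ad_g : g → D(g) and ad_{D(g)} : D(g) → D²(g) are the adjoint representations. Then every derivation of D(g) is inner (i.e. D(g) is complete, its center being automatically trivial) if and only if the image of g under this embedding is a Lie ideal of D²(g). -/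
private lemma center_der_eq_bot {K : Type*} [Field K]
    (g : Type*) [LieRing g] [LieAlgebra K g]
    (hcenter : LieAlgebra.center K g = ⊥) :
    LieAlgebra.center K (LieDerivation K g g) = ⊥ := by
  rw [LieSubmodule.eq_bot_iff]
  intro f hf
  have hf' : ∀ x : LieDerivation K g g, ⁅x, f⁆ = 0 :=
    (LieModule.mem_maxTrivSubmodule K (LieDerivation K g g) (LieDerivation K g g) f).mp hf
  have hmem : f ∈ LieModule.maxTrivSubmodule K g (LieDerivation K g g) :=
    (LieModule.mem_maxTrivSubmodule K g (LieDerivation K g g) f).mpr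
      (fun x => by rw [← LieDerivation.lie_ad]; exact hf' _)
  rwa [LieDerivation.maxTrivSubmodule_eq_bot_of_center_eq_bot hcenter,
    LieSubmodule.mem_bot] at hmem

/-- For a Lie algebra `g` with trivial center, the derivation algebra `D(g)` is complete
(every derivation of `D(g)` is inner) iff the image of `g` under the embedding
`X ↦ ad_{D(g)}(ad_g X)` is a Lie ideal of `D²(g)`. -/
theorem derivation_algebra_complete_iff_ideal {K : Type*} [Field K]
    (g : Type*) [LieRing g] [LieAlgebra K g]
    (hcenter : LieAlgebra.center K g = ⊥) :
    (∀ F : LieDerivation K (LieDerivation K g g) (LieDerivation K g g),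
        ∃ f : LieDerivation K g g, F = LieDerivation.ad K (LieDerivation K g g) f) ↔
    (∀ F : LieDerivation K (LieDerivation K g g) (LieDerivation K g g),
      ∀ Y ∈ Set.range
        (fun X : g => LieDerivation.ad K (LieDerivation K g g) (LieDerivation.ad K g X)),
        ⁅F, Y⁆ ∈ Set.range
          (fun X : g => LieDerivation.ad K (LieDerivation K g g) (LieDerivation.ad K g X))) := by
  set D := LieDerivation K g g with hD
  have hinj_g : Function.Injective (LieDerivation.ad K g) :=
    LieDerivation.injective_ad_of_center_eq_bot hcenter
  have hinj_D : Function.Injective (LieDerivation.ad K D) :=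
    LieDerivation.injective_ad_of_center_eq_bot (center_der_eq_bot g hcenter)
  constructor
  · intro h F Y hY
    obtain ⟨X, rfl⟩ := hY
    obtain ⟨f, rfl⟩ := h F
    refine ⟨f X, ?_⟩
    exact (congrArg (LieDerivation.ad K D) (LieDerivation.lie_der_ad_eq_ad_der f X).symm).trans
      ((LieDerivation.ad K D).map_lie f (LieDerivation.ad K g X))
  · intro h F
    -- every F (ad X) lies in the range of ad
    have key : ∀ X : g, ∃ X' : g, LieDerivation.ad K g X' = F (LieDerivation.ad K g X) := by
      intro X
      obtain ⟨X', hX'⟩ := h F _ ⟨X, rfl⟩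
      exact ⟨X', hinj_D (hX'.trans (LieDerivation.lie_der_ad_eq_ad_der F _))⟩
    choose τ hτ using key
    -- τ is a Lie derivation
    have hadd : ∀ X Y : g, τ (X + Y) = τ X + τ Y := by
      intro X Y
      apply hinj_g
      rw [hτ, map_add (LieDerivation.ad K g), map_add (LieDerivation.ad K g),
        map_add, hτ, hτ]
    have hsmul : ∀ (c : K) (X : g), τ (c • X) = c • τ X := by
      intro c X
      apply hinj_g
      rw [hτ, map_smul (LieDerivation.ad K g), map_smul (LieDerivation.ad K g),
        map_smul, hτ]
    have hleib : ∀ X Y : g, τ ⁅X, Y⁆ = ⁅X, τ Y⁆ - ⁅Y, τ X⁆ := by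
      intro X Y
      apply hinj_g
      rw [hτ, map_sub (LieDerivation.ad K g), (LieDerivation.ad K g).map_lie,
        F.apply_lie_eq_sub, ← hτ, ← hτ, ← (LieDerivation.ad K g).map_lie,
        ← (LieDerivation.ad K g).map_lie]
    set σ : D := ⟨{ toFun := τ, map_add' := hadd, map_smul' := hsmul }, hleib⟩ with hσ
    refine ⟨σ, ?_⟩
    have hFad : ∀ Y : g, F (LieDerivation.ad K g Y) = ⁅σ, LieDerivation.ad K g Y⁆ := by
      intro Y
      rw [LieDerivation.lie_der_ad_eq_ad_der, ← hτ]
      rfl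
    have hFf : ∀ f : D, F f = ⁅σ, f⁆ := by
      intro f
      have hz : ∀ X : g, (F f - ⁅σ, f⁆) X = 0 := by
        intro X
        have hfad : ⁅f, LieDerivation.ad K g X⁆ = LieDerivation.ad K g (f X) :=
          LieDerivation.lie_der_ad_eq_ad_der f X
        have e1 : F ⁅f, LieDerivation.ad K g X⁆
            = ⁅f, F (LieDerivation.ad K g X)⁆ - ⁅LieDerivation.ad K g X, F f⁆ :=
          F.apply_lie_eq_sub f (LieDerivation.ad K g X)
        rw [hfad, hFad (f X), hFad X] at e1
        have e2 : ⁅σ, LieDerivation.ad K g (f X)⁆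
            = ⁅f, ⁅σ, LieDerivation.ad K g X⁆⁆ + ⁅⁅σ, f⁆, LieDerivation.ad K g X⁆ := by
          rw [← hfad, leibniz_lie]
          abel
        have h12 := e1.symm.trans e2
        have e3' : ⁅f, ⁅σ, LieDerivation.ad K g X⁆⁆ + ⁅⁅σ, f⁆, LieDerivation.ad K g X⁆
            = ⁅f, ⁅σ, LieDerivation.ad K g X⁆⁆ + -⁅LieDerivation.ad K g X, F f⁆ := by
          rw [← h12]
          abel
        have e3 := add_left_cancel e3'
        have e4 : ⁅F f - ⁅σ, f⁆, LieDerivation.ad K g X⁆ = 0 := by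
          rw [sub_lie, e3, ← lie_skew (F f) (LieDerivation.ad K g X)]
          abel
        have h0 : LieDerivation.ad K g ((F f - ⁅σ, f⁆) X) = 0 := by
          rw [← LieDerivation.lie_der_ad_eq_ad_der, e4]
        have hm : (F f - ⁅σ, f⁆) X ∈ LieAlgebra.center K g := by
          rw [← LieDerivation.ad_ker_eq_center, LieHom.mem_ker]
          exact h0
        rwa [hcenter, LieSubmodule.mem_bot] at hm
      have h5 : F f - ⁅σ, f⁆ = 0 := by
        ext X
        simpa using hz X
      exact sub_eq_zero.mp h5
    ext f
    rw [hFf f, LieDerivation.ad_apply_apply]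
end

section
/- Let g be a Lie algebra over a field K with trivial center, let D(g) be its Lie algebra of derivations, and let F be a derivation of D(g). If F(ad_X) = 0 for every X ∈ g (where ad_X ∈ D(g) is the inner derivation ad_X(Y) = ⁅X, Y⁆), then F = 0. -/
/-- If `g` has trivial center and a derivation `F` of `D(g)` vanishes on all inner derivations
`ad_X`, `X ∈ g`, then `F = 0`. -/
theorem derivation_vanishing_on_inner {K : Type*} [Field K]
    (g : Type*) [LieRing g] [LieAlgebra K g]
    (hcenter : LieAlgebra.center K g = ⊥)
    (F : LieDerivation K (LieDerivation K g g) (LieDerivation K g g))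
    (hF : ∀ X : g, F (LieDerivation.ad K g X) = 0) :
    F = 0 := by
  ext D X
  have h1 : LieDerivation.ad K g (F D X) = ⁅F D, LieDerivation.ad K g X⁆ :=
    (LieDerivation.lie_der_ad_eq_ad_der (F D) X).symm
  have h2 : F ⁅D, LieDerivation.ad K g X⁆ = ⁅F D, LieDerivation.ad K g X⁆ := by
    rw [F.apply_lie_eq_add, hF X]
    simp
  have h3 : F ⁅D, LieDerivation.ad K g X⁆ = 0 := by
    rw [LieDerivation.lie_der_ad_eq_ad_der, hF]
  have h4 : LieDerivation.ad K g (F D X) = 0 := by rw [h1, ← h2, h3]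
  have h5 : F D X ∈ LieAlgebra.center K g := by
    rw [← LieDerivation.ad_ker_eq_center]
    exact h4
  rw [hcenter] at h5
  simpa using h5
end

section
/- Let g be a Lie algebra over a field K and let h ≤ k be Lie subalgebras of g such that h is an ideal of k (⁅k, h⁆ ⊆ h) and k is an ideal of g (⁅g, k⁆ ⊆ k). Assume that h, regarded as a Lie algebra in its own right, is complete (it has trivial center and every derivation of h is inner), and that k has trivial center. Then h is an ideal of g, i.e. ⁅g, h⁆ ⊆ h. -/
/-- If `h ⊴ k ⊴ g`, `h` is a complete Lie algebra (trivial center and all derivations inner)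
and `k` has trivial center, then `h` is an ideal of `g`. -/
theorem complete_subideal_is_ideal {K : Type*} [Field K] {g : Type*} [LieRing g]
    [LieAlgebra K g] (h k : LieSubalgebra K g) (hhk : h ≤ k)
    (hIdeal_hk : ∀ x ∈ k, ∀ y ∈ h, ⁅x, y⁆ ∈ h)
    (hIdeal_kg : ∀ x : g, ∀ y ∈ k, ⁅x, y⁆ ∈ k)
    (hcenter_h : LieAlgebra.center K h = ⊥)
    (hinner_h : ∀ f : LieDerivation K h h, ∃ X : h, f = LieDerivation.ad K h X)
    (hcenter_k : LieAlgebra.center K k = ⊥) :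
    ∀ x : g, ∀ y ∈ h, ⁅x, y⁆ ∈ h := by
  have hZh : ∀ e ∈ h, (∀ z ∈ h, ⁅e, z⁆ = (0:g)) → e = 0 := by
    intro e he hez
    have : (⟨e, he⟩ : h) ∈ LieAlgebra.center K h := by
      rw [LieModule.mem_maxTrivSubmodule]
      intro z
      apply Subtype.ext
      show ⁅(z : g), e⁆ = 0
      rw [← lie_skew, hez z z.2, neg_zero]
    rw [hcenter_h, LieSubmodule.mem_bot] at this
    simpa using congrArg (Subtype.val) this
  have hZk : ∀ e ∈ k, (∀ z ∈ k, ⁅e, z⁆ = (0:g)) → e = 0 := by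
    intro e he hez
    have : (⟨e, he⟩ : k) ∈ LieAlgebra.center K k := by
      rw [LieModule.mem_maxTrivSubmodule]
      intro z
      apply Subtype.ext
      show ⁅(z : g), e⁆ = 0
      rw [← lie_skew, hez z z.2, neg_zero]
    rw [hcenter_k, LieSubmodule.mem_bot] at this
    simpa using congrArg (Subtype.val) this
  have decomp : ∀ t ∈ k, ∃ w ∈ h, ∀ z ∈ h, ⁅t - w, z⁆ = (0:g) := by
    intro t ht
    let f : LieDerivation K h h :=
      { toFun := fun y => ⟨⁅t, (y:g)⁆, hIdeal_hk t ht _ y.2⟩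
        map_add' := fun a b => by apply Subtype.ext; simp
        map_smul' := fun c a => by
          apply Subtype.ext
          show ⁅t, c • (a:g)⁆ = c • ⁅t, (a:g)⁆
          rw [lie_smul]
        leibniz' := fun a b => by
          apply Subtype.ext
          show ⁅t, ⁅(a:g), (b:g)⁆⁆ = ⁅(a:g), ⁅t, (b:g)⁆⁆ - ⁅(b:g), ⁅t, (a:g)⁆⁆
          rw [leibniz_lie, ← lie_skew (⁅t, (a:g)⁆) (b:g)]
          abel }
    obtain ⟨w, hw⟩ := hinner_h f
    refine ⟨(w : g), w.2, fun z hz => ?_⟩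
    have := congrArg (fun F => ((F ⟨z, hz⟩ : h) : g)) hw
    simp only [f, LieDerivation.ad_apply_apply, LinearMap.coe_mk, AddHom.coe_mk] at this
    have h3 : ⁅t, z⁆ = ⁅(w:g), z⁆ := this
    rw [sub_lie, h3, sub_self]
  intro x y hy
  have hxk : ⁅x, y⁆ ∈ k := hIdeal_kg x y (hhk hy)
  obtain ⟨w, hw, hc⟩ := decomp _ hxk
  have hak : ⁅x, y⁆ - w ∈ k := k.sub_mem hxk (hhk hw)
  have key : ∀ t ∈ k, ⁅⁅x, y⁆ - w, t⁆ = (0:g) := by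
    intro t ht
    obtain ⟨w', hw', hc'⟩ := decomp t ht
    have h1 : ⁅⁅x, y⁆ - w, w'⁆ = (0:g) := hc w' hw'
    set c' : g := t - w' with hc'def
    have hc'k : c' ∈ k := k.sub_mem ht (hhk hw')
    have h2 : ⁅⁅x, y⁆ - w, c'⁆ = (0:g) := by
      have hyc' : ⁅(y:g), c'⁆ = 0 := by
        have := hc' y hy; rw [← lie_skew, this, neg_zero]
      have hwc' : ⁅w, c'⁆ = (0:g) := by
        have := hc' w hw; rw [← lie_skew, this, neg_zero]
      have he : ⁅⁅x, y⁆ - w, c'⁆ = -⁅(y:g), ⁅x, c'⁆⁆ := by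
        rw [sub_lie, hwc', sub_zero, lie_lie, hyc', lie_zero, zero_sub]
      have heh : ⁅⁅x, y⁆ - w, c'⁆ ∈ h := by
        rw [he]
        exact h.neg_mem <| by
          have : ⁅⁅x, c'⁆, (y:g)⁆ ∈ h := hIdeal_hk _ (hIdeal_kg x c' hc'k) y hy
          rw [← lie_skew]; exact h.neg_mem this
      refine hZh _ heh fun z hz => ?_
      rw [lie_lie, hc' z hz, hc z hz, lie_zero, lie_zero, sub_zero]
    have : t = w' + c' := by rw [hc'def]; abel
    rw [this, lie_add, h1, h2, add_zero]
  have hz0 : ⁅x, y⁆ - w = 0 := hZk _ hak key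
  rw [sub_eq_zero.mp hz0]; exact hw
end

section
/- Let g be a finite-dimensional real Lie algebra equipped with a symmetric bilinear form B, and let h be a Lie subalgebra of g such that: (i) B restricted to h is non-degenerate and B is positive definite on the B-orthogonal complement m of h in g; and (ii) for every X ∈ h, the operator ad_X is skew-symmetric with respect to B, i.e. B(⁅X, Y⁆, Z) + B(Y, ⁅X, Z⁆) = 0 for all Y, Z ∈ g. Then for any Lie subalgebra k of g containing h, h is a subideal of k (there is a finite chain h = l₀ ⊴ l₁ ⊴ ⋯ ⊴ lₙ = k of subalgebras of k, each an ideal of the next) if and only if h is an ideal of k (⁅k, h⁆ ⊆ h). -/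
/-- `a` is a subideal of `b`: there is a finite chain of Lie subalgebras from `a` to `b`,
each an ideal of the next. -/
def LieSubalgebra.IsSubidealOf {K : Type*} [Field K] {g : Type*} [LieRing g] [LieAlgebra K g]
    (a b : LieSubalgebra K g) : Prop :=
  ∃ (n : ℕ) (l : Fin (n + 1) → LieSubalgebra K g), l 0 = a ∧ l (Fin.last n) = b ∧
    ∀ i : Fin n, (l i.castSucc).IsIdealOf (l i.succ)

/-- Let `g` be a finite-dimensional real Lie algebra with a symmetric bilinear form `B`, and
let `h` be a Lie subalgebra such that `B` is non-degenerate on `h`, positive definite on the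
`B`-orthogonal complement of `h`, and every `ad_X`, `X ∈ h`, is `B`-skew-symmetric. Then for
any Lie subalgebra `k` of `g` containing `h`, `h` is a subideal of `k` iff it is an ideal of
`k`. -/
theorem subideal_iff_ideal_of_skew_symmetric {g : Type*} [LieRing g] [LieAlgebra ℝ g]
    [FiniteDimensional ℝ g] (B : g →ₗ[ℝ] g →ₗ[ℝ] ℝ)
    (hsymm : ∀ X Y : g, B X Y = B Y X)
    (h : LieSubalgebra ℝ g)
    (hnondeg : ∀ X ∈ h, (∀ Y ∈ h, B X Y = 0) → X = 0)
    (hpos : ∀ Y : g, (∀ X ∈ h, B Y X = 0) → Y ≠ 0 → 0 < B Y Y)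
    (hskew : ∀ X ∈ h, ∀ Y Z : g, B ⁅X, Y⁆ Z + B Y ⁅X, Z⁆ = 0) :
    ∀ k : LieSubalgebra ℝ g, h ≤ k →
      (h.IsSubidealOf k ↔ ∀ x ∈ k, ∀ y ∈ h, ⁅x, y⁆ ∈ h) := by
  intro k hk
  constructor
  · -- forward: subideal → ideal
    rintro ⟨n, l, hl0, hln, hideal⟩
    -- setup: orthogonal decomposition
    set W : Submodule ℝ g := h.toSubmodule with hWdef
    have hrefl : LinearMap.IsRefl B := fun x y hxy => by rw [hsymm]; exact hxy
    have hnd : (LinearMap.BilinForm.restrict B W).Nondegenerate := by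
      refine (LinearMap.IsRefl.nondegenerate_iff_separatingLeft (hrefl.domRestrict W)).mpr ?_
      intro x hx
      exact Subtype.ext (hnondeg x x.2 (fun Y hY => hx ⟨Y, hY⟩))
    have hcompl : IsCompl W (LinearMap.BilinForm.orthogonal B W) :=
      LinearMap.BilinForm.isCompl_orthogonal_of_restrict_nondegenerate hrefl hnd
    set m : Submodule ℝ g := LinearMap.BilinForm.orthogonal B W with hmdef
    have hmem_m : ∀ w : g, w ∈ m ↔ ∀ X ∈ h, B X w = 0 := fun w => Iff.rfl
    -- ad(h) preserves m
    have hadm : ∀ X ∈ h, ∀ w ∈ m, ⁅X, w⁆ ∈ m := by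
      intro X hX w hw X' hX'
      have := hskew X hX X' w
      have hb : B ⁅X, X'⁆ w = 0 := (hmem_m w).mp hw _ (h.lie_mem hX hX')
      have : B X' ⁅X, w⁆ = 0 := by linarith [hskew X hX X' w]
      exact this
    -- key lemma: if ⁅x, y⁆ is in the idealizer of h for all y ∈ h, then x idealizes h
    have key : ∀ x : g, (∀ y ∈ h, ∀ y' ∈ h, ⁅(⁅x, y⁆ : g), y'⁆ ∈ h) →
        ∀ y ∈ h, ⁅x, y⁆ ∈ h := by
      intro x hx y hy
      set z : g := ⁅x, y⁆ with hzdef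
      obtain ⟨a, ha, w, hw, haw⟩ := Submodule.mem_sup.mp
        (by rw [hcompl.sup_eq_top]; trivial : z ∈ W ⊔ m)
      -- w is in the idealizer of h
      have hwN : ∀ y' ∈ h, ⁅w, y'⁆ ∈ h := by
        intro y' hy'
        have h1 : ⁅z, y'⁆ ∈ h := hx y hy y' hy'
        have h2 : ⁅a, y'⁆ ∈ h := h.lie_mem ha hy'
        have : w = z - a := by rw [← haw]; abel
        rw [this, sub_lie]
        exact h.sub_mem h1 h2
      -- brackets ⁅w, y'⁆ lie in h ∩ m = 0
      have hw0 : ∀ y' ∈ h, ⁅w, y'⁆ = (0 : g) := by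
        intro y' hy'
        have h1 : ⁅w, y'⁆ ∈ h := hwN y' hy'
        have h2 : ⁅w, y'⁆ ∈ m := by
          have := hadm y' hy' w hw
          have hneg : ⁅w, y'⁆ = -⁅y', w⁆ := (lie_skew _ _).symm
          rw [hneg]; exact neg_mem this
        have := hcompl.disjoint
        exact (Submodule.disjoint_def.mp this) _ h1 h2
      -- B w w = 0
      have hBww : B w w = 0 := by
        have h1 : B w a = 0 := hrefl _ _ ((hmem_m w).mp hw a ha)
        have h2 : B w z = B w w + B w a := by rw [← haw, map_add]; ring
        have h3 : B ⁅y, w⁆ x + B w ⁅y, x⁆ = 0 := hskew y hy w x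
        have h4 : ⁅y, w⁆ = (0 : g) := by
          rw [← lie_skew, hw0 y hy, neg_zero]
        have h5 : B w ⁅y, x⁆ = 0 := by rw [h4] at h3; simpa using h3
        have h6 : B w z = 0 := by
          rw [hzdef, ← lie_skew x y, map_neg, h5, neg_zero]
        linarith
      -- hence w = 0 by positivity
      have hwz : w = 0 := by
        by_contra hne
        exact absurd hBww (ne_of_gt (hpos w (fun X hX => hrefl _ _ ((hmem_m w).mp hw X hX)) hne))
      show z ∈ h
      rw [← haw, hwz, add_zero]; exact ha
    -- induction along the chain
    have main : ∀ i : Fin (n + 1), h ≤ l i ∧ ∀ x ∈ l i, ∀ y ∈ h, ⁅x, y⁆ ∈ h := by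
      intro i
      induction i using Fin.induction with
      | zero =>
        rw [hl0]
        exact ⟨le_refl h, fun x hx y hy => h.lie_mem hx hy⟩
      | succ i ih =>
        obtain ⟨hle, hN⟩ := ih
        have hI := hideal i
        refine ⟨hle.trans hI.1, ?_⟩
        intro x hx
        apply key
        intro y hy y' hy'
        have hbr : ⁅x, y⁆ ∈ l i.castSucc := hI.2 x hx y (hle hy)
        exact hN _ hbr y' hy'
    have := (main (Fin.last n)).2
    rw [hln] at this
    exact this
  · -- backward: ideal → subideal
    intro hid
    refine ⟨1, ![h, k], rfl, rfl, ?_⟩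
    intro i
    fin_cases i
    exact ⟨hk, hid⟩
end

section
/- Let g be a finite-dimensional real Lie algebra and let h be a compactly embedded Lie subalgebra of g: there exists an inner product B on g (a positive-definite symmetric bilinear form) such that for every X ∈ h the operator ad_X is skew-symmetric with respect to B, i.e. B(⁅X, Y⁆, Z) + B(Y, ⁅X, Z⁆) = 0 for all Y, Z ∈ g. Then for any Lie subalgebras hʹ ≤ h and gʹ ≤ g with hʹ ≤ gʹ, the algebra hʹ is a subideal of gʹ (there is a finite chain hʹ = l₀ ⊴ l₁ ⊴ ⋯ ⊴ lₙ = gʹ of subalgebras of gʹ, each an ideal of the next) if and only if hʹ is an ideal of gʹ (⁅gʹ, hʹ⁆ ⊆ hʹ). -/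
/-- Key lemma: under the compact-embedding hypothesis, an ideal of an ideal is an ideal. -/
lemma key_step_s15 {g : Type*} [LieRing g] [LieAlgebra ℝ g] [FiniteDimensional ℝ g]
    (B : g →ₗ[ℝ] g →ₗ[ℝ] ℝ)
    (hsymm : ∀ X Y : g, B X Y = B Y X)
    (hpos : ∀ X : g, X ≠ 0 → 0 < B X X)
    (h : LieSubalgebra ℝ g)
    (hskew : ∀ X ∈ h, ∀ Y Z : g, B ⁅X, Y⁆ Z + B Y ⁅X, Z⁆ = 0)
    (a b c : LieSubalgebra ℝ g) (hah : a ≤ h) (hab : a.IsIdealOf b)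
    (hbc : b.IsIdealOf c) : a.IsIdealOf c := by
  refine ⟨hab.1.trans hbc.1, fun x hx y hy => ?_⟩
  set A : Submodule ℝ g := a.toSubmodule with hA
  have hrefl : LinearMap.IsRefl (B : LinearMap.BilinForm ℝ g) := by
    intro m n hmn; rw [hsymm]; exact hmn
  have hAmem : ∀ z, z ∈ A ↔ z ∈ a := fun z => Iff.rfl
  have hnd : (LinearMap.BilinForm.restrict B A).Nondegenerate := by
    constructor
    all_goals
    rintro ⟨m, hm⟩ hmz
    by_contra hne
    have hm0 : m ≠ 0 := by simpa using hne
    have := hmz ⟨m, hm⟩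
    simp only [LinearMap.BilinForm.restrict_apply, LinearMap.domRestrict_apply] at this
    exact (hpos m hm0).ne' this
  have hcompl := LinearMap.BilinForm.isCompl_orthogonal_of_restrict_nondegenerate
    (B := B) (W := A) hrefl hnd
  set w := ⁅x, y⁆ with hw
  have hxyb : w ∈ b := hbc.2 x hx y (hab.1 hy)
  have hwmem : w ∈ A ⊔ LinearMap.BilinForm.orthogonal B A := by
    rw [hcompl.sup_eq_top]; trivial
  obtain ⟨u, hu, v, hv, huv⟩ := Submodule.mem_sup.mp hwmem
  have hvb : v ∈ b := by
    have hub : u ∈ b := hab.1 hu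
    have hveq : v = w - u := by rw [← huv]; abel
    rw [hveq]; exact b.sub_mem hxyb hub
  -- ⁅y, v⁆ lies in both a and its orthogonal, hence is 0
  have hyv_a : ⁅y, v⁆ ∈ a := by
    have h1 : ⁅v, y⁆ ∈ a := hab.2 v hvb y hy
    have h2 : ⁅y, v⁆ = -⁅v, y⁆ := (lie_skew y v).symm ▸ rfl
    rw [h2]; exact a.neg_mem h1
  have hyv_orth : ⁅y, v⁆ ∈ LinearMap.BilinForm.orthogonal B A := by
    rw [LinearMap.BilinForm.mem_orthogonal_iff]
    intro n hn
    have h1 := hskew y (hah hy) n v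
    -- B ⁅y,n⁆ v + B n ⁅y,v⁆ = 0
    have hyn : ⁅y, n⁆ ∈ a := a.lie_mem hy hn
    have hBv : (B ⁅y, n⁆) v = 0 :=
      (LinearMap.BilinForm.mem_orthogonal_iff.mp hv) ⁅y, n⁆ hyn
    have : (B n) ⁅y, v⁆ = 0 := by linarith [h1, hBv]
    exact this
  have hyv0 : ⁅y, v⁆ = 0 := by
    by_contra hne
    have hpos' := hpos _ hne
    have : (B ⁅y, v⁆) ⁅y, v⁆ = 0 :=
      (LinearMap.BilinForm.mem_orthogonal_iff.mp hyv_orth) ⁅y, v⁆ hyv_a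
    exact hpos'.ne' this
  -- now show B v v = 0 hence v = 0
  have hBwv : (B w) v = 0 := by
    have h1 := hskew y (hah hy) x v
    -- B ⁅y,x⁆ v + B x ⁅y,v⁆ = 0
    rw [hyv0] at h1
    simp only [map_zero] at h1
    have hwyx : w = -⁅y, x⁆ := by rw [hw, ← lie_skew]
    rw [hwyx, map_neg, LinearMap.neg_apply]
    linarith
  have hBuv : (B u) v = 0 := (LinearMap.BilinForm.mem_orthogonal_iff.mp hv) u hu
  have hBvv : (B v) v = 0 := by
    have : (B (u + v)) v = 0 := by rw [huv]; exact hBwv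
    simp only [map_add, LinearMap.add_apply] at this
    linarith
  have hv0 : v = 0 := by
    by_contra hne
    exact (hpos v hne).ne' hBvv
  have hwu : w = u := by rw [← huv, hv0, add_zero]
  show w ∈ a
  rw [hwu]; exact hu

/-- Collapsing a chain: by induction, the head of the chain is an ideal of the last term. -/
lemma chain_ideal {g : Type*} [LieRing g] [LieAlgebra ℝ g] [FiniteDimensional ℝ g]
    (B : g →ₗ[ℝ] g →ₗ[ℝ] ℝ)
    (hsymm : ∀ X Y : g, B X Y = B Y X)
    (hpos : ∀ X : g, X ≠ 0 → 0 < B X X)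
    (h : LieSubalgebra ℝ g)
    (hskew : ∀ X ∈ h, ∀ Y Z : g, B ⁅X, Y⁆ Z + B Y ⁅X, Z⁆ = 0) :
    ∀ n (l : Fin (n + 1) → LieSubalgebra ℝ g), l 0 ≤ h →
      (∀ i : Fin n, (l i.castSucc).IsIdealOf (l i.succ)) →
      (l 0).IsIdealOf (l (Fin.last n)) := by
  intro n
  induction n with
  | zero =>
    intro l _ _
    exact ⟨le_rfl, fun x hx y hy => (l 0).lie_mem hx hy⟩
  | succ n ih =>
    intro l hlh hchain
    have h0 : (l 0).IsIdealOf (l ((Fin.last n).castSucc)) := by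
      have := ih (fun i => l i.castSucc) hlh (fun i => by
        have := hchain i.castSucc
        exact this)
      simpa using this
    have hlast : (l ((Fin.last n).castSucc)).IsIdealOf (l (Fin.last (n + 1))) := by
      have := hchain (Fin.last n)
      simpa [Fin.succ_last] using this
    exact key_step_s15 B hsymm hpos h hskew _ _ _ hlh h0 hlast

/-- Let `h` be a compactly embedded Lie subalgebra of a finite-dimensional real Lie algebra
`g`: there is an inner product `B` on `g` making every `ad_X`, `X ∈ h`, skew-symmetric. Then
for any Lie subalgebras `h' ≤ h` and `g' ≤ g` with `h' ≤ g'`, the algebra `h'` is a subideal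
of `g'` iff it is an ideal of `g'`. -/
theorem compactly_embedded_subideal_iff_ideal {g : Type*} [LieRing g] [LieAlgebra ℝ g]
    [FiniteDimensional ℝ g] (h : LieSubalgebra ℝ g)
    (hcompact : ∃ B : g →ₗ[ℝ] g →ₗ[ℝ] ℝ,
      (∀ X Y : g, B X Y = B Y X) ∧
      (∀ X : g, X ≠ 0 → 0 < B X X) ∧
      (∀ X ∈ h, ∀ Y Z : g, B ⁅X, Y⁆ Z + B Y ⁅X, Z⁆ = 0)) :
    ∀ h' g' : LieSubalgebra ℝ g, h' ≤ h → h' ≤ g' →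
      (h'.IsSubidealOf g' ↔ ∀ x ∈ g', ∀ y ∈ h', ⁅x, y⁆ ∈ h') := by
  obtain ⟨B, hsymm, hpos, hskew⟩ := hcompact
  intro h' g' hh'h hh'g'
  constructor
  · rintro ⟨n, l, hl0, hln, hchain⟩
    have := chain_ideal B hsymm hpos h hskew n l (hl0 ▸ hh'h) hchain
    rw [hl0, hln] at this
    exact this.2
  · intro hideal
    exact ⟨1, fun i => if i = 0 then h' else g', by simp, by simp [Fin.last], fun i => by
      have hi : i = 0 := Subsingleton.elim i 0
      subst hi
      simp only [Fin.castSucc_zero, if_pos rfl, Fin.succ_zero_eq_one]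
      have h10 : (1 : Fin 2) ≠ 0 := by decide
      rw [if_neg h10]
      exact ⟨hh'g', hideal⟩⟩
end

section
/- Let g be a finite-dimensional real semisimple Lie algebra with Killing form κ, and let θ : g → g be a Cartan involution: a Lie algebra automorphism with θ ∘ θ = id such that the symmetric bilinear form ⟨X, Y⟩ = −κ(X, θ(Y)) is positive definite. Let u = {X ∈ g : θ(X) = X} and p = {X ∈ g : θ(X) = −X}. Let h be a Lie subalgebra of g containing u, or containing p. Then for any Lie subalgebra k of g containing h, h is a subideal of k (there is a finite chain h = l₀ ⊴ l₁ ⊴ ⋯ ⊴ lₙ = k of subalgebras of k, each an ideal of the next) if and only if h is an ideal of k (⁅k, h⁆ ⊆ h). -/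
set_option linter.unusedSectionVars false

section CartanAux

variable {g : Type*} [LieRing g] [LieAlgebra ℝ g] [FiniteDimensional ℝ g]
  [LieAlgebra.IsKilling ℝ g]

/-- The positive definite form `B X Y = -κ(X, θ Y)`. -/
private noncomputable def cartanB (θ : g →ₗ⁅ℝ⁆ g) : LinearMap.BilinForm ℝ g :=
  - (killingForm ℝ g).compl₂ θ.toLinearMap

private lemma cartanB_apply (θ : g →ₗ⁅ℝ⁆ g) (X Y : g) :
    cartanB θ X Y = -(killingForm ℝ g X (θ Y)) := rfl

private lemma killing_theta (θ : g →ₗ⁅ℝ⁆ g) (hinv : ∀ X : g, θ (θ X) = X) (X Y : g) :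
    killingForm ℝ g (θ X) (θ Y) = killingForm ℝ g X Y := by
  let e : g ≃ₗ⁅ℝ⁆ g := { θ with invFun := θ, left_inv := hinv, right_inv := hinv }
  exact LieAlgebra.killingForm_of_equiv_apply e X Y

private lemma cartanB_symm (θ : g →ₗ⁅ℝ⁆ g) (hinv : ∀ X : g, θ (θ X) = X) (X Y : g) :
    cartanB θ X Y = cartanB θ Y X := by
  rw [cartanB_apply, cartanB_apply, neg_inj]
  calc killingForm ℝ g X (θ Y) = killingForm ℝ g (θ (θ X)) (θ Y) := by rw [hinv]
    _ = killingForm ℝ g (θ X) Y := killing_theta θ hinv _ _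
    _ = killingForm ℝ g Y (θ X) := LieModule.traceForm_comm ℝ g g _ _

private lemma cartanB_lie (θ : g →ₗ⁅ℝ⁆ g) (hinv : ∀ X : g, θ (θ X) = X) (Z X Y : g) :
    cartanB θ ⁅Z, X⁆ Y = - cartanB θ X ⁅θ Z, Y⁆ := by
  have h1 : ⁅Z, θ Y⁆ = θ ⁅θ Z, Y⁆ := by rw [LieHom.map_lie, hinv]
  rw [cartanB_apply, cartanB_apply,
    LieModule.traceForm_apply_lie_apply' ℝ g g Z X (θ Y), h1]

private lemma cartanB_definite (θ : g →ₗ⁅ℝ⁆ g)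
    (hpos : ∀ X : g, X ≠ 0 → 0 < -(killingForm ℝ g X (θ X)))
    (X : g) (hX : cartanB θ X X = 0) : X = 0 := by
  by_contra hne
  rw [cartanB_apply] at hX
  exact absurd hX (hpos X hne).ne'

private lemma theta_stable (θ : g →ₗ⁅ℝ⁆ g) (hinv : ∀ X : g, θ (θ X) = X)
    (h l : LieSubalgebra ℝ g)
    (hcont : {X : g | θ X = X} ⊆ (h : Set g) ∨ {X : g | θ X = -X} ⊆ (h : Set g))
    (hhl : h ≤ l) {X : g} (hX : X ∈ l) : θ X ∈ l := by
  rcases hcont with hc | hc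
  · have h1 : X + θ X ∈ h := hc (show θ (X + θ X) = X + θ X by
      rw [map_add, hinv, add_comm])
    have h2 : θ X = (X + θ X) - X := by abel
    rw [h2]
    exact sub_mem (hhl h1) hX
  · have h1 : X - θ X ∈ h := hc (show θ (X - θ X) = -(X - θ X) by
      rw [map_sub, hinv]; abel)
    have h2 : θ X = X - (X - θ X) := by abel
    rw [h2]
    exact sub_mem hX (hhl h1)

private lemma key_step_s16 (θ : g →ₗ⁅ℝ⁆ g) (hinv : ∀ X : g, θ (θ X) = X)
    (hpos : ∀ X : g, X ≠ 0 → 0 < -(killingForm ℝ g X (θ X)))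
    (a b : LieSubalgebra ℝ g) (hab : a ≤ b)
    (hid : ∀ x ∈ b, ∀ y ∈ a, ⁅x, y⁆ ∈ a)
    (hstab : ∀ z ∈ a, θ z ∈ a) {x : g} (hx : x ∈ b) :
    ∃ y ∈ a, ∀ z ∈ a, ⁅x - y, z⁆ = 0 := by
  have hrefl : (cartanB θ).IsRefl := by
    intro u v huv
    rw [cartanB_symm θ hinv] at huv
    exact huv
  set W : Submodule ℝ g := (a : Submodule ℝ g) with hW
  have hnd : ((cartanB θ).restrict W).Nondegenerate := by
    constructor <;> intro m hm
    all_goals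
      have := hm m
      rw [LinearMap.BilinForm.restrict_apply] at this
      have hm0 : (m : g) = 0 := cartanB_definite θ hpos _ this
      exact Subtype.ext hm0
  have hcompl : IsCompl W ((cartanB θ).orthogonal W) :=
    LinearMap.BilinForm.isCompl_orthogonal_of_restrict_nondegenerate hrefl hnd
  have hx' : x ∈ W ⊔ (cartanB θ).orthogonal W := by rw [hcompl.sup_eq_top]; trivial
  obtain ⟨y, hy, w, hw, hyw⟩ := Submodule.mem_sup.mp hx'
  have hya : y ∈ a := hy
  refine ⟨y, hya, fun z hz => ?_⟩
  have hxyw : x - y = w := by rw [← hyw]; abel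
  rw [hxyw]
  -- `v := ⁅w, z⁆ ∈ a` since `w = x - y ∈ b` and `a` is an ideal of `b`
  have hwb : w ∈ b := by rw [← hxyw]; exact sub_mem hx (hab hya)
  have hva : ⁅w, z⁆ ∈ a := hid w hwb z hz
  -- show `B ⁅w,z⁆ ⁅w,z⁆ = 0`
  have hBzero : cartanB θ ⁅w, z⁆ ⁅w, z⁆ = 0 := by
    have h1 : (⁅w, z⁆ : g) = -⁅z, w⁆ := (lie_skew w z).symm
    have h2 : ∀ u : g, cartanB θ ⁅w, z⁆ u = - cartanB θ ⁅z, w⁆ u := by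
      intro u
      rw [h1, map_neg, LinearMap.neg_apply]
    rw [h2, cartanB_lie θ hinv z w ⁅w, z⁆, neg_neg]
    have h3 : (⁅θ z, ⁅w, z⁆⁆ : g) ∈ a := a.lie_mem (hstab z hz) hva
    have h4 : cartanB θ ⁅θ z, ⁅w, z⁆⁆ w = 0 := hw _ h3
    rw [cartanB_symm θ hinv]
    exact h4
  have := cartanB_definite θ hpos _ hBzero
  exact this

end CartanAux

/-- Let `g` be a finite-dimensional real semisimple Lie algebra (non-degenerate Killing form),
`θ` a Cartan involution with `+1`-eigenspace `u` and `-1`-eigenspace `p`, and `h` a Lie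
subalgebra containing `u` or containing `p`. Then for any Lie subalgebra `k` of `g`
containing `h`, the algebra `h` is a subideal of `k` iff it is an ideal of `k`. -/
theorem subideal_iff_ideal_of_cartan_eigenspace {g : Type*} [LieRing g] [LieAlgebra ℝ g]
    [FiniteDimensional ℝ g] [LieAlgebra.IsKilling ℝ g]
    (θ : g →ₗ⁅ℝ⁆ g) (hinv : ∀ X : g, θ (θ X) = X)
    (hpos : ∀ X : g, X ≠ 0 → 0 < -(killingForm ℝ g X (θ X)))
    (h : LieSubalgebra ℝ g)
    (hcont : {X : g | θ X = X} ⊆ (h : Set g) ∨ {X : g | θ X = -X} ⊆ (h : Set g)) :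
    ∀ k : LieSubalgebra ℝ g, h ≤ k →
      (h.IsSubidealOf k ↔ ∀ x ∈ k, ∀ y ∈ h, ⁅x, y⁆ ∈ h) := by
  intro k hk
  constructor
  · rintro ⟨n, l, hl0, hln, hch⟩
    have main : ∀ m, ∀ hm : m < n + 1,
        h ≤ l ⟨m, hm⟩ ∧ ∀ x ∈ l ⟨m, hm⟩, ∀ y ∈ h, ⁅x, y⁆ ∈ h := by
      intro m
      induction m with
      | zero =>
        intro hm
        have h0 : (⟨0, hm⟩ : Fin (n + 1)) = 0 := rfl
        rw [h0, hl0]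
        exact ⟨le_rfl, fun x hx y hy => h.lie_mem hx hy⟩
      | succ m ih =>
        intro hm
        have hm' : m < n + 1 := by omega
        obtain ⟨ihle, ihbr⟩ := ih hm'
        have hmn : m < n := by omega
        obtain ⟨hab, hid⟩ := hch ⟨m, hmn⟩
        have hcast : (⟨m, hmn⟩ : Fin n).castSucc = ⟨m, hm'⟩ := rfl
        have hsucc : (⟨m, hmn⟩ : Fin n).succ = ⟨m + 1, hm⟩ := rfl
        rw [hcast, hsucc] at hab hid
        have hstab : ∀ z ∈ l ⟨m, hm'⟩, θ z ∈ l ⟨m, hm'⟩ :=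
          fun z hz => theta_stable θ hinv h _ hcont ihle hz
        refine ⟨ihle.trans hab, fun x hx y hy => ?_⟩
        obtain ⟨y', hy', hz0⟩ := key_step_s16 θ hinv hpos _ _ hab hid hstab hx
        have hsplit : (⁅x, y⁆ : g) = ⁅x - y', y⁆ + ⁅y', y⁆ := by
          rw [← add_lie, sub_add_cancel]
        rw [hsplit, hz0 y (ihle hy), zero_add]
        exact ihbr y' hy' y hy
    have hlast : (⟨n, Nat.lt_succ_self n⟩ : Fin (n + 1)) = Fin.last n := rfl
    have := (main n (Nat.lt_succ_self n)).2
    rw [hlast, hln] at this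
    exact this
  · intro hid
    refine ⟨1, ![h, k], rfl, ?_, ?_⟩
    · show ![h, k] 1 = k
      rfl
    · intro i
      fin_cases i
      exact ⟨hk, hid⟩
end

section
/- Let h be a Lie subalgebra of a Lie algebra g over a field K, and assume h is perfect, i.e. h = ⁅h, h⁆. Then the normalizer N_g(h) of h in g is a self-normalizing subalgebra of g: N_g(N_g(h)) = N_g(h). -/
/-- If `h` is a perfect Lie subalgebra of `g`, then the normalizer of `h` in `g` is a
self-normalizing subalgebra of `g`. -/
theorem normalizer_self_normalizing_of_perfect {K : Type*} [Field K] {g : Type*} [LieRing g]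
    [LieAlgebra K g] (h : LieSubalgebra K g)
    (hperf : ⁅(⊤ : LieIdeal K h), (⊤ : LieIdeal K h)⁆ = ⊤) :
    h.normalizer.normalizer = h.normalizer := by
  refine le_antisymm ?_ (LieSubalgebra.le_normalizer _)
  intro x hx
  rw [LieSubalgebra.mem_normalizer_iff] at hx ⊢
  intro y hy
  have hy' : (⟨y, hy⟩ : h) ∈ (⊤ : LieIdeal K h) := trivial
  rw [← hperf, ← LieSubmodule.mem_toSubmodule,
    LieSubmodule.lieIdeal_oper_eq_linear_span] at hy'
  have key : ∀ z : h, (z : h) ∈ Submodule.span K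
      { m : h | ∃ (a : (⊤ : LieIdeal K h)) (b : (⊤ : LieIdeal K h)), ⁅(a : h), (b : h)⁆ = m } →
      ⁅x, (z : g)⁆ ∈ h := by
    intro z hz
    refine Submodule.span_induction ?_ ?_ ?_ ?_ hz
    · rintro m ⟨a, b, rfl⟩
      have hab : ((⁅(a : h), (b : h)⁆ : h) : g) = ⁅((a : h) : g), ((b : h) : g)⁆ := rfl
      rw [hab, leibniz_lie]
      have hxa : ⁅x, ((a : h) : g)⁆ ∈ h.normalizer :=
        hx _ (h.le_normalizer (a : h).2)
      have hxb : ⁅x, ((b : h) : g)⁆ ∈ h.normalizer :=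
        hx _ (h.le_normalizer (b : h).2)
      refine h.add_mem ?_ ?_
      · exact (LieSubalgebra.mem_normalizer_iff h _).mp hxa _ (b : h).2
      · rw [← lie_skew]
        exact h.neg_mem ((LieSubalgebra.mem_normalizer_iff h _).mp hxb _ (a : h).2)
    · simp
    · intro m₁ m₂ _ _ hm₁ hm₂
      have : ((m₁ + m₂ : h) : g) = (m₁ : g) + (m₂ : g) := rfl
      rw [this, lie_add]
      exact h.add_mem hm₁ hm₂
    · intro t m _ hm
      have : ((t • m : h) : g) = t • (m : g) := rfl
      rw [this, lie_smul]
      exact h.smul_mem t hm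
  exact key ⟨y, hy⟩ hy'
end
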